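/- arXiv:1501.04251 — 2 statements merged into one kernel-verified Lean document; each statement's English description precedes it below -/
import Mathlib

section
/- Let F ∈ B_c, t > 0 and u(x,t) = ∫_ℝ F(x−ξ) Θ_t'(ξ) dξ. Then sup_{x∈ℝ} |u(x,t)| ≤ ‖F‖'_∞ / (2√(πt)). Moreover the constant is sharp: for every t > 0 and every c < 1/(2√(πt)) there exists a nonzero F ∈ B_c such that sup_{x∈ℝ} |u(x,t)| > c · ‖F‖'_∞. -/
open MeasureTheory Filter Topology

/-- The Gauss–Weierstrass heat kernel `Θ_t(x) = (4πt)^(−1/2) exp(−x²/(4t))` for `t > 0`. -/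
noncomputable def heatK (t x : ℝ) : ℝ :=
  (Real.sqrt (4 * Real.pi * t))⁻¹ * Real.exp (-x ^ 2 / (4 * t))

/-- Spatial derivative of the heat kernel: `Θ_t'(ξ) = −ξ Θ_t(ξ)/(2t)`. -/
noncomputable def heatK' (t x : ℝ) : ℝ := -x * heatK t x / (2 * t)

/-- `F ∈ B_c`: continuous, vanishing at `−∞`, with a finite limit at `+∞`. -/
def memBc (F : ℝ → ℝ) : Prop :=
  Continuous F ∧ Tendsto F atBot (nhds (0 : ℝ)) ∧ ∃ L : ℝ, Tendsto F atTop (nhds L)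

/-- `‖F‖'_∞ = sup_{x<y} |F(x) − F(y)|`. -/
noncomputable def normBc (F : ℝ → ℝ) : ℝ :=
  sSup {r : ℝ | ∃ x y : ℝ, x < y ∧ r = |F x - F y|}

/-- Heat convolution `u(x,t) = ∫ F(x−ξ) Θ_t'(ξ) dξ` of the distribution `f = F'`. -/
noncomputable def heatConv (F : ℝ → ℝ) (t x : ℝ) : ℝ := ∫ ξ : ℝ, F (x - ξ) * heatK' t ξ

/-!
Since `Θ_t'` is odd, `u(x,t) = ∫_{ξ>0} (F(x−ξ) − F(x+ξ)) Θ_t'(ξ) dξ`; the first factor is bounded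
by `‖F‖'_∞` and `∫_{ξ>0} |Θ_t'| = Θ_t(0) = 1/(2√(πt))`. For sharpness, the ramp rising from `0` to
`1` on `[0, ε]` has `‖F‖'_∞ = 1` and `u(0,t) ≥ ∫_{ξ≤−ε} Θ_t' = Θ_t(ε)`, which tends to `Θ_t(0)` as
`ε → 0`.
-/

open Set

section HeatKernel

variable {t : ℝ}

lemma heatK_pos (ht : 0 < t) (x : ℝ) : 0 < heatK t x := by
  have := Real.pi_pos
  unfold heatK
  positivity

lemma heatK_neg (t x : ℝ) : heatK t (-x) = heatK t x := by
  simp [heatK]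

lemma heatK'_neg (t x : ℝ) : heatK' t (-x) = -heatK' t x := by
  simp only [heatK', heatK_neg]
  ring

lemma heatK_zero (t : ℝ) : heatK t 0 = 1 / (2 * Real.sqrt (Real.pi * t)) := by
  rw [heatK, show (4 : ℝ) * Real.pi * t = 2 ^ 2 * (Real.pi * t) by ring,
    Real.sqrt_mul (by norm_num), Real.sqrt_sq (by norm_num)]
  simp

lemma continuous_heatK (t : ℝ) : Continuous (heatK t) := by
  unfold heatK
  fun_prop

lemma hasDerivAt_heatK (t x : ℝ) : HasDerivAt (heatK t) (heatK' t x) x := by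
  have h : HasDerivAt (fun x : ℝ => -x ^ 2 / (4 * t)) (-(2 * x ^ 1) / (4 * t)) x :=
    (hasDerivAt_pow 2 x).neg.div_const (4 * t)
  refine (h.exp.const_mul (Real.sqrt (4 * Real.pi * t))⁻¹).congr_deriv ?_
  simp only [heatK', heatK]
  field_simp
  ring

lemma heatK'_nonpos (ht : 0 < t) {x : ℝ} (hx : 0 ≤ x) : heatK' t x ≤ 0 := by
  have := heatK_pos ht x
  unfold heatK'
  apply div_nonpos_of_nonpos_of_nonneg _ (by positivity)
  nlinarith

lemma heatK'_nonneg (ht : 0 < t) {x : ℝ} (hx : x ≤ 0) : 0 ≤ heatK' t x := by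
  simpa [heatK'_neg] using heatK'_nonpos ht (neg_nonneg.mpr hx)

lemma tendsto_heatK_atTop (ht : 0 < t) : Tendsto (heatK t) atTop (𝓝 0) := by
  have h : Tendsto (fun x : ℝ => -x ^ 2 / (4 * t)) atTop atBot := by
    simpa only [neg_div, Function.comp_def] using
      tendsto_neg_atTop_atBot.comp ((tendsto_pow_atTop two_ne_zero).atTop_div_const
        (by positivity : (0 : ℝ) < 4 * t))
  have h' := (Real.tendsto_exp_atBot.comp h).const_mul (Real.sqrt (4 * Real.pi * t))⁻¹
  rw [mul_zero] at h'
  exact h'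

lemma tendsto_heatK_atBot (ht : 0 < t) : Tendsto (heatK t) atBot (𝓝 0) := by
  simpa [Function.comp_def, heatK_neg] using (tendsto_heatK_atTop ht).comp tendsto_neg_atBot_atTop

lemma integrable_heatK' (ht : 0 < t) : Integrable (heatK' t) := by
  refine ((integrable_mul_exp_neg_mul_sq (b := 1 / (4 * t)) (by positivity)).const_mul
    (-(Real.sqrt (4 * Real.pi * t))⁻¹ / (2 * t))).congr (ae_of_all _ fun x => ?_)
  simp only [heatK', heatK]
  ring_nf

lemma integral_Ioi_heatK' (ht : 0 < t) (a : ℝ) : ∫ x in Ioi a, heatK' t x = -heatK t a := by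
  rw [integral_Ioi_of_hasDerivAt_of_tendsto (continuous_heatK t).continuousWithinAt
    (fun x _ => hasDerivAt_heatK t x) (integrable_heatK' ht).integrableOn (tendsto_heatK_atTop ht),
    zero_sub]

lemma integral_Iic_heatK' (ht : 0 < t) (a : ℝ) : ∫ x in Iic a, heatK' t x = heatK t a := by
  rw [integral_Iic_of_hasDerivAt_of_tendsto (continuous_heatK t).continuousWithinAt
    (fun x _ => hasDerivAt_heatK t x) (integrable_heatK' ht).integrableOn (tendsto_heatK_atBot ht),
    sub_zero]

end HeatKernel

lemma integral_mul_eq_integral_Ioi_of_odd {g k : ℝ → ℝ} (hk : ∀ x, k (-x) = -k x)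
    (hgk : Integrable fun x => g x * k x) :
    ∫ x, g x * k x = ∫ x in Ioi 0, (g x - g (-x)) * k x := by
  have hgk_neg : Integrable fun x => g (-x) * k x := by
    simpa [hk] using hgk.comp_neg.neg
  have h_Iic : ∫ x in Iic 0, g x * k x = -∫ x in Ioi 0, g (-x) * k x := by
    rw [← neg_zero, ← integral_comp_neg_Ioi, ← integral_neg, neg_zero]
    simp [hk]
  rw [← intervalIntegral.integral_Iic_add_Ioi hgk.integrableOn hgk.integrableOn, h_Iic,
    neg_add_eq_sub, ← integral_sub hgk.integrableOn hgk_neg.integrableOn]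
  simp only [sub_mul]

lemma memBc.isBounded_range {F : ℝ → ℝ} (hF : memBc F) : Bornology.IsBounded (range F) := by
  obtain ⟨hc, hbot, L, htop⟩ := hF
  exact hc.isBounded_range_iff_isBigO_atTop_atBot.mpr ⟨htop.isBigO_one ℝ, hbot.isBigO_one ℝ⟩

lemma abs_sub_le_normBc {F : ℝ → ℝ} (hF : Bornology.IsBounded (range F)) {x y : ℝ} (hxy : x < y) :
    |F x - F y| ≤ normBc F := by
  obtain ⟨C, hC⟩ := isBounded_iff_forall_norm_le.mp hF
  refine le_csSup ⟨2 * C, ?_⟩ ⟨x, y, hxy, rfl⟩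
  rintro r ⟨a, b, -, rfl⟩
  have ha := abs_le.mp (hC _ (mem_range_self a))
  have hb := abs_le.mp (hC _ (mem_range_self b))
  exact abs_le.mpr ⟨by linarith, by linarith⟩

section HeatConvolution

variable {F : ℝ → ℝ} {t : ℝ}

lemma integrable_comp_sub_mul_heatK' (hF : memBc F) (ht : 0 < t) (x : ℝ) :
    Integrable fun ξ => F (x - ξ) * heatK' t ξ := by
  obtain ⟨C, hC⟩ := isBounded_iff_forall_norm_le.mp hF.isBounded_range
  exact (integrable_heatK' ht).bdd_mul (hF.1.comp (continuous_sub_left x)).aestronglyMeasurable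
    (ae_of_all _ fun ξ => hC _ (mem_range_self _))

lemma heatConv_eq_integral_Ioi (hF : memBc F) (ht : 0 < t) (x : ℝ) :
    heatConv F t x = ∫ ξ in Ioi 0, (F (x - ξ) - F (x + ξ)) * heatK' t ξ := by
  rw [heatConv, integral_mul_eq_integral_Ioi_of_odd (heatK'_neg t)
    (integrable_comp_sub_mul_heatK' hF ht x)]
  simp only [sub_neg_eq_add]

theorem abs_heatConv_le (hF : memBc F) (ht : 0 < t) (x : ℝ) :
    |heatConv F t x| ≤ normBc F / (2 * Real.sqrt (Real.pi * t)) := by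
  have h_pointwise : ∀ ξ ∈ Ioi (0 : ℝ),
      ‖(F (x - ξ) - F (x + ξ)) * heatK' t ξ‖ ≤ normBc F * -heatK' t ξ := by
    intro ξ hξ
    rw [Real.norm_eq_abs, abs_mul, abs_of_nonpos (heatK'_nonpos ht (le_of_lt hξ))]
    exact mul_le_mul_of_nonneg_right
      (abs_sub_le_normBc hF.isBounded_range (by linarith [mem_Ioi.mp hξ]))
      (neg_nonneg.mpr (heatK'_nonpos ht (le_of_lt hξ)))
  calc |heatConv F t x|
      ≤ ∫ ξ in Ioi 0, normBc F * -heatK' t ξ := by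
        rw [heatConv_eq_integral_Ioi hF ht x, ← Real.norm_eq_abs]
        exact norm_integral_le_of_norm_le ((integrable_heatK' ht).integrableOn.neg.const_mul _)
          (ae_restrict_of_forall_mem measurableSet_Ioi h_pointwise)
    _ = normBc F / (2 * Real.sqrt (Real.pi * t)) := by
        rw [integral_const_mul, integral_neg, integral_Ioi_heatK' ht, neg_neg, heatK_zero,
          mul_one_div]

end HeatConvolution

noncomputable def ramp (ε y : ℝ) : ℝ := max 0 (min 1 (y / ε))

section Ramp

variable {ε : ℝ}

lemma ramp_of_nonpos (hε : 0 ≤ ε) {y : ℝ} (hy : y ≤ 0) : ramp ε y = 0 :=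
  max_eq_left (min_le_of_right_le (div_nonpos_of_nonpos_of_nonneg hy hε))

lemma ramp_of_le (hε : 0 < ε) {y : ℝ} (hy : ε ≤ y) : ramp ε y = 1 := by
  rw [ramp, min_eq_left ((one_le_div hε).mpr hy), max_eq_right zero_le_one]

lemma ramp_mem_Icc (ε y : ℝ) : ramp ε y ∈ Icc 0 1 :=
  ⟨le_max_left _ _, max_le zero_le_one (min_le_left _ _)⟩

lemma memBc_ramp (hε : 0 < ε) : memBc (ramp ε) := by
  refine ⟨by unfold ramp; fun_prop, ?_, 1, ?_⟩
  · exact tendsto_const_nhds.congr' <|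
      eventually_atBot.mpr ⟨0, fun y hy => (ramp_of_nonpos hε.le hy).symm⟩
  · exact tendsto_const_nhds.congr' <| eventually_atTop.mpr ⟨ε, fun y hy => (ramp_of_le hε hy).symm⟩

lemma normBc_ramp (hε : 0 < ε) : normBc (ramp ε) = 1 := by
  have h_attained : |ramp ε 0 - ramp ε ε| = 1 := by
    rw [ramp_of_nonpos hε.le le_rfl, ramp_of_le hε le_rfl]
    norm_num
  refine le_antisymm (csSup_le ⟨1, 0, ε, hε, h_attained.symm⟩ ?_)
    (h_attained ▸ abs_sub_le_normBc (memBc_ramp hε).isBounded_range hε)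
  rintro r ⟨a, b, -, rfl⟩
  obtain ⟨ha₀, ha₁⟩ := ramp_mem_Icc ε a
  obtain ⟨hb₀, hb₁⟩ := ramp_mem_Icc ε b
  exact abs_sub_le_of_nonneg_of_le ha₀ ha₁ hb₀ hb₁

lemma heatK_le_heatConv_ramp {t : ℝ} (ht : 0 < t) (hε : 0 < ε) :
    heatK t ε ≤ heatConv (ramp ε) t 0 := by
  have h_pointwise : ∀ ξ, (Iic (-ε)).indicator (heatK' t) ξ ≤ ramp ε (0 - ξ) * heatK' t ξ := by
    intro ξ
    by_cases hξε : ξ ≤ -ε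
    · rw [indicator_of_mem (show ξ ∈ Iic (-ε) from hξε), ramp_of_le hε (by linarith), one_mul]
    rw [indicator_of_notMem (show ξ ∉ Iic (-ε) from hξε)]
    by_cases hξ : ξ ≤ 0
    · exact mul_nonneg (ramp_mem_Icc ε _).1 (heatK'_nonneg ht hξ)
    · rw [ramp_of_nonpos hε.le (by linarith), zero_mul]
  calc heatK t ε = ∫ ξ, (Iic (-ε)).indicator (heatK' t) ξ := by
        rw [integral_indicator measurableSet_Iic, integral_Iic_heatK' ht, heatK_neg]
    _ ≤ heatConv (ramp ε) t 0 :=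
        integral_mono ((integrable_heatK' ht).indicator measurableSet_Iic)
          (integrable_comp_sub_mul_heatK' (memBc_ramp hε) ht 0) h_pointwise

end Ramp

theorem exists_lt_abs_heatConv {t : ℝ} (ht : 0 < t) {c : ℝ}
    (hc : c < 1 / (2 * Real.sqrt (Real.pi * t))) :
    ∃ F : ℝ → ℝ, memBc F ∧ F ≠ 0 ∧ ∃ x : ℝ, c * normBc F < |heatConv F t x| := by
  rw [← heatK_zero] at hc
  have h_near : ∀ᶠ ε in 𝓝[>] 0, c < heatK t ε :=
    nhdsWithin_le_nhds (((continuous_heatK t).tendsto 0).eventually (eventually_gt_nhds hc))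
  obtain ⟨ε, hcε, hε⟩ := (h_near.and self_mem_nhdsWithin).exists
  refine ⟨ramp ε, memBc_ramp hε, fun h => ?_, 0, ?_⟩
  · simpa [ramp_of_le hε le_rfl] using congrFun h ε
  · rw [normBc_ramp hε, mul_one]
    exact hcε.trans_le ((heatK_le_heatConv_ramp ht hε).trans (le_abs_self _))

/-- `sup_x |u(x,t)| ≤ ‖F‖'_∞/(2√(πt))`, and the constant is sharp: for every `t > 0` and
every `c < 1/(2√(πt))` there is a nonzero `F ∈ B_c` with `sup_x |u(x,t)| > c‖F‖'_∞`. -/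
theorem stmt1 :
    (∀ F : ℝ → ℝ, memBc F → ∀ t : ℝ, 0 < t → ∀ x : ℝ,
      |heatConv F t x| ≤ normBc F / (2 * Real.sqrt (Real.pi * t))) ∧
    (∀ t : ℝ, 0 < t → ∀ c : ℝ, c < 1 / (2 * Real.sqrt (Real.pi * t)) →
      ∃ F : ℝ → ℝ, memBc F ∧ F ≠ 0 ∧ ∃ x : ℝ, c * normBc F < |heatConv F t x|) :=
  ⟨fun _ hF _ ht x => abs_heatConv_le hF ht x, fun _ ht _ hc => exists_lt_abs_heatConv ht hc⟩
end

section
/- Let n ≥ 1. Set a_k = k/(n+1) for 0 ≤ k ≤ n+1, let g_n(x) = Σ_{k=0}^{n} C(n,k) (−1)^k · 1_{(a_k, a_{k+1})}(x), and define G_n(x) = (1/(n−1)!) ∫_0^x (x−s)^{n−1} g_n(s) ds for x ∈ [0,1] (so G_n is the n-fold iterated integral of g_n from 0). Then: (i) G_n is (n−1)-times continuously differentiable on [0,1]; (ii) G_n(x)/x^n → 1/n! as x → 0⁺; (iii) G_n(1−x) = G_n(x) for all x ∈ [0,1], so that G_n(x) = O((1−x)^n) as x → 1⁻; and (iv) G_n(x)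 > 0 for every x ∈ (0,1). -/
/-!
For `x ≥ 0`, integrating the `n + 1` pieces of `g_n` and applying Pascal's rule gives
`G_n(x) = S_n((n + 1) x) / (n! (n + 1)^n)`, where
`S_n(t) = Σ_{k=0}^{n+1} (-1)^k C(n+1,k) (t - k)_+^n` is `n!` times the cardinal B-spline of
degree `n`. Everything follows from properties of `S_n`: it is `C^{n-1}` because `t ↦ t_+^n` is;
it equals `t^n` on `[0, 1]`; it is symmetric about `(n + 1)/2` because
`(-u)_+^n = (-1)^n (u^n - u_+^n)` and the `(n + 1)`-st difference of a polynomial of degree `n`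
vanishes; and it is positive on `(0, n + 1)` by induction on `n` through the convolution
identity `S_{n+1}(t) = (n + 1) ∫_{t-1}^t S_n`.
-/

open MeasureTheory Filter Topology Asymptotics

/-- `g_n = Σ_{k=0}^n C(n,k) (−1)^k 1_{(k/(n+1),(k+1)/(n+1))}`. -/
noncomputable def gfun (n : ℕ) (x : ℝ) : ℝ :=
  ∑ k ∈ Finset.range (n + 1), (n.choose k : ℝ) * (-1) ^ k *
    Set.indicator (Set.Ioo ((k : ℝ) / (n + 1)) (((k : ℝ) + 1) / (n + 1)))
      (fun _ => (1 : ℝ)) x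

/-- `G_n(x) = (1/(n−1)!) ∫_0^x (x−s)^{n−1} g_n(s) ds`, the `n`-fold iterated
integral of `g_n` from `0`. -/
noncomputable def Gfun (n : ℕ) (x : ℝ) : ℝ :=
  ((n - 1).factorial : ℝ)⁻¹ * ∫ s in (0 : ℝ)..x, (x - s) ^ (n - 1) * gfun n s

open Finset

noncomputable def truncPow (j : ℕ) (t : ℝ) : ℝ := max t 0 ^ j

lemma truncPow_of_nonneg {t : ℝ} (ht : 0 ≤ t) (j : ℕ) : truncPow j t = t ^ j := by
  rw [truncPow, max_eq_left ht]

lemma truncPow_of_nonpos {t : ℝ} (ht : t ≤ 0) {j : ℕ} (hj : j ≠ 0) : truncPow j t = 0 := by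
  rw [truncPow, max_eq_right ht, zero_pow hj]

@[fun_prop]
lemma continuous_truncPow (j : ℕ) : Continuous (truncPow j) := by
  unfold truncPow; fun_prop

lemma truncPow_neg {j : ℕ} (hj : j ≠ 0) (t : ℝ) :
    truncPow j (-t) = (-1) ^ j * (t ^ j - truncPow j t) := by
  rcases le_total t 0 with ht | ht
  · rw [truncPow_of_nonneg (neg_nonneg.2 ht), truncPow_of_nonpos ht hj, neg_pow]
    ring
  · rw [truncPow_of_nonpos (neg_nonpos.2 ht) hj, truncPow_of_nonneg ht, sub_self, mul_zero]

lemma truncPow_mul {c : ℝ} (hc : 0 ≤ c) (j : ℕ) (t : ℝ) :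
    truncPow j (c * t) = c ^ j * truncPow j t := by
  rw [truncPow, truncPow, ← mul_pow, mul_max_of_nonneg _ _ hc, mul_zero]

lemma hasDerivAt_truncPow {j : ℕ} (hj : j ≠ 0) (t : ℝ) :
    HasDerivAt (truncPow (j + 1)) ((j + 1) * truncPow j t) t := by
  refine hasDerivAt_of_hasDerivAt_of_ne' (g := fun u => (j + 1) * truncPow j u) (x := 0)
    (fun s hs => ?_) (continuous_truncPow _).continuousAt (by fun_prop) t
  rcases hs.lt_or_gt with hs | hs
  · have h : truncPow (j + 1) =ᶠ[𝓝 s] fun _ => 0 := by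
      filter_upwards [Iio_mem_nhds hs] with u hu using truncPow_of_nonpos hu.le j.succ_ne_zero
    rw [truncPow_of_nonpos hs.le hj, mul_zero]
    exact (hasDerivAt_const s 0).congr_of_eventuallyEq h
  · have h : truncPow (j + 1) =ᶠ[𝓝 s] fun u => u ^ (j + 1) := by
      filter_upwards [Ioi_mem_nhds hs] with u hu using truncPow_of_nonneg hu.le _
    rw [truncPow_of_nonneg hs.le]
    simpa using (hasDerivAt_pow (j + 1) s).congr_of_eventuallyEq h

lemma contDiff_truncPow (j : ℕ) : ContDiff ℝ (j - 1 : ℕ) (truncPow j) := by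
  obtain _ | j := j
  · exact contDiff_zero.2 (continuous_truncPow 0)
  induction j with
  | zero => exact contDiff_zero.2 (continuous_truncPow 1)
  | succ j ih =>
    have hderiv : deriv (truncPow (j + 2)) = fun t => (j + 2 : ℝ) * truncPow (j + 1) t := by
      funext t
      exact_mod_cast (hasDerivAt_truncPow j.succ_ne_zero t).deriv
    rw [Nat.add_sub_cancel, Nat.cast_add, Nat.cast_one, contDiff_succ_iff_deriv]
    refine ⟨fun t => (hasDerivAt_truncPow j.succ_ne_zero t).differentiableAt, by simp, ?_⟩
    rw [hderiv]
    exact contDiff_const.mul ih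

section AltChooseSum

variable {R : Type*} [CommRing R]

lemma neg_one_pow_mul_self (k : ℕ) : (-1 : R) ^ k * (-1) ^ k = 1 := by
  rw [← pow_add, Even.neg_one_pow ⟨k, rfl⟩]

def altChooseSum (m : ℕ) (f : ℕ → R) : R :=
  ∑ k ∈ range (m + 1), (-1) ^ k * m.choose k * f k

lemma altChooseSum_sub (m : ℕ) (f g : ℕ → R) :
    altChooseSum m (fun k => f k - g k) = altChooseSum m f - altChooseSum m g := by
  simp only [altChooseSum, mul_sub, sum_sub_distrib]

lemma altChooseSum_const_mul (m : ℕ) (c : R) (f : ℕ → R) :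
    altChooseSum m (fun k => c * f k) = c * altChooseSum m f := by
  simp only [altChooseSum, mul_sum]
  exact sum_congr rfl fun k _ => by ring

lemma altChooseSum_eq_fwdDiff_iter {M : Type*} [AddCommMonoid M] (m : ℕ) (f : M → R) (y h : M) :
    altChooseSum m (fun k => f (y + k • h)) = (-1) ^ m * (fwdDiff h)^[m] f y := by
  rw [fwdDiff_iter_eq_sum_shift, altChooseSum, mul_sum]
  refine sum_congr rfl fun k hk => ?_
  rw [← pow_mul_pow_sub (-1 : R) (Nat.lt_succ_iff.1 (mem_range.1 hk)), zsmul_eq_mul]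
  push_cast
  linear_combination
    (-(-1) ^ k * m.choose k * f (y + k • h)) * neg_one_pow_mul_self (R := R) (m - k)

lemma altChooseSum_succ (m : ℕ) (f : ℕ → R) :
    altChooseSum (m + 1) f = altChooseSum m (fun k => f k - f (k + 1)) := by
  have hf : (fun k => f k - f (k + 1)) = fun k => -1 * fwdDiff 1 f (0 + k • 1) := by
    ext k; simp [fwdDiff]
  have h := altChooseSum_eq_fwdDiff_iter (m + 1) f 0 1
  simp only [zero_add, smul_eq_mul, mul_one] at h
  rw [h, hf, altChooseSum_const_mul, altChooseSum_eq_fwdDiff_iter, Function.iterate_succ_apply,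
    pow_succ]
  ring

lemma altChooseSum_reflect (m : ℕ) {f g : ℕ → R} (h : ∀ k ≤ m, g k = f (m - k)) :
    altChooseSum m g = (-1) ^ m * altChooseSum m f := by
  rw [altChooseSum, ← sum_range_reflect, altChooseSum, mul_sum]
  refine sum_congr rfl fun k hk => ?_
  have hk : k ≤ m := Nat.lt_succ_iff.1 (mem_range.1 hk)
  rw [Nat.add_sub_cancel, h _ (Nat.sub_le m k), Nat.sub_sub_self hk, Nat.choose_symm hk,
    ← pow_mul_pow_sub (-1 : R) hk]
  linear_combination (-(-1) ^ (m - k) * m.choose k * f k) * neg_one_pow_mul_self (R := R) k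

lemma altChooseSum_eval_eq_zero {m : ℕ} {P : Polynomial R} (hP : P.natDegree < m) :
    altChooseSum m (fun k => P.eval (k : R)) = 0 := by
  have h := altChooseSum_eq_fwdDiff_iter m P.eval 0 1
  rw [Polynomial.fwdDiff_iter_eq_zero_of_degree_lt hP] at h
  simpa using h

end AltChooseSum

lemma integral_altChooseSum {a b : ℝ} (m : ℕ) (f : ℕ → ℝ → ℝ)
    (hf : ∀ k, IntervalIntegrable (f k) volume a b) :
    ∫ s in a..b, altChooseSum m (fun k => f k s) =
      altChooseSum m (fun k => ∫ s in a..b, f k s) := by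
  simp only [altChooseSum]
  rw [intervalIntegral.integral_finsetSum fun k _ => (hf k).const_mul _]
  simp only [intervalIntegral.integral_const_mul]

/-- `m!` times the cardinal B-spline of degree `m`, with knots `0, 1, …, m + 1`. -/
noncomputable def bSpline (m : ℕ) (t : ℝ) : ℝ :=
  altChooseSum (m + 1) (fun k => truncPow m (t - k))

lemma continuous_bSpline (m : ℕ) : Continuous (bSpline m) := by
  unfold bSpline altChooseSum; fun_prop

lemma contDiff_bSpline (m : ℕ) : ContDiff ℝ (m - 1 : ℕ) (bSpline m) := by
  unfold bSpline altChooseSum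
  exact ContDiff.sum fun k _ =>
    contDiff_const.mul ((contDiff_truncPow m).comp (contDiff_id.sub contDiff_const))

lemma bSpline_of_nonpos {m : ℕ} (hm : m ≠ 0) {t : ℝ} (ht : t ≤ 0) : bSpline m t = 0 := by
  rw [bSpline, altChooseSum]
  refine sum_eq_zero fun k _ => ?_
  rw [truncPow_of_nonpos (by linarith [k.cast_nonneg (α := ℝ)]) hm, mul_zero]

lemma bSpline_of_le_one {m : ℕ} (hm : m ≠ 0) {t : ℝ} (ht0 : 0 ≤ t) (ht1 : t ≤ 1) :
    bSpline m t = t ^ m := by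
  rw [bSpline, altChooseSum, sum_eq_single 0]
  · simp [truncPow_of_nonneg ht0]
  · intro k _ hk
    rw [truncPow_of_nonpos _ hm, mul_zero]
    have : (1 : ℝ) ≤ k := by exact_mod_cast Nat.one_le_iff_ne_zero.2 hk
    linarith
  · simp

lemma bSpline_symm {m : ℕ} (hm : m ≠ 0) (t : ℝ) : bSpline m (m + 1 - t) = bSpline m t := by
  have hpoly : altChooseSum (m + 1) (fun k => (t - k) ^ m) = 0 := by
    have hdeg : ((Polynomial.C t - Polynomial.X) ^ m).natDegree < m + 1 := by
      have h1 : (Polynomial.C t - Polynomial.X).natDegree ≤ 1 :=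
        (Polynomial.natDegree_sub_le _ _).trans (by simp)
      exact Nat.lt_succ_of_le
        (Polynomial.natDegree_pow_le.trans (mul_le_of_le_one_right (Nat.zero_le m) h1))
    simpa using altChooseSum_eval_eq_zero hdeg
  rw [bSpline, altChooseSum_reflect (m + 1) (f := fun j => truncPow m (-(t - j)))
    fun k hk => by rw [Nat.cast_sub hk]; push_cast; ring_nf]
  simp only [truncPow_neg hm]
  rw [altChooseSum_const_mul, altChooseSum_sub, hpoly, ← bSpline, pow_succ]
  linear_combination (bSpline m t) * neg_one_pow_mul_self (R := ℝ) m

lemma bSpline_of_ge {m : ℕ} (hm : m ≠ 0) {t : ℝ} (ht : m + 1 ≤ t) : bSpline m t = 0 := by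
  rw [← bSpline_symm hm t, bSpline_of_nonpos hm (by linarith)]

lemma bSpline_succ {m : ℕ} (hm : m ≠ 0) (t : ℝ) :
    bSpline (m + 1) t = (m + 1) * ∫ s in t - 1..t, bSpline m s := by
  have hstep : ∀ k : ℕ, truncPow (m + 1) (t - k) - truncPow (m + 1) (t - (k + 1 : ℕ)) =
      (m + 1) * ∫ s in t - 1..t, truncPow m (s - k) := by
    intro k
    rw [← intervalIntegral.integral_const_mul, intervalIntegral.integral_eq_sub_of_hasDerivAt
      (f := fun s => truncPow (m + 1) (s - k))
      (fun s _ => by simpa using (hasDerivAt_truncPow hm (s - k)).comp_sub_const s (k : ℝ))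
      (by apply Continuous.intervalIntegrable; fun_prop)]
    push_cast; ring_nf
  rw [bSpline, altChooseSum_succ]
  simp only [hstep]
  rw [altChooseSum_const_mul, ← integral_altChooseSum]
  · rfl
  · intro k; apply Continuous.intervalIntegrable; fun_prop

lemma bSpline_one_pos {t : ℝ} (ht : t ∈ Set.Ioo (0 : ℝ) 2) : 0 < bSpline 1 t := by
  simp only [bSpline, altChooseSum, sum_range_succ, truncPow]
  norm_num
  obtain ⟨ht0, ht2⟩ := ht
  rcases le_total t 1 with h | h
  · rw [max_eq_left ht0.le, max_eq_right (by linarith), max_eq_right (by linarith)]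
    linarith
  · rw [max_eq_left ht0.le, max_eq_left (by linarith), max_eq_right (by linarith)]
    linarith

lemma bSpline_pos {m : ℕ} (hm : m ≠ 0) {t : ℝ} (ht : t ∈ Set.Ioo (0 : ℝ) (m + 1)) :
    0 < bSpline m t := by
  induction m, Nat.one_le_iff_ne_zero.2 hm using Nat.le_induction generalizing t with
  | base => exact bSpline_one_pos (by norm_num at ht ⊢; exact ht)
  | succ m hm ih =>
    have hm0 : m ≠ 0 := by omega
    have hnonneg : ∀ s, 0 ≤ bSpline m s := by
      intro s
      rcases le_or_gt s 0 with hs | hs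
      · rw [bSpline_of_nonpos hm0 hs]
      rcases lt_or_ge s (m + 1) with hs' | hs'
      · exact (ih hm0 ⟨hs, hs'⟩).le
      · rw [bSpline_of_ge hm0 hs']
    obtain ⟨ht0, ht1⟩ := ht
    push_cast at ht1
    rw [bSpline_succ hm0]
    refine mul_pos (by positivity) (intervalIntegral.integral_pos (by linarith)
      (continuous_bSpline m).continuousOn (fun s _ => hnonneg s) ?_)
    -- `(m + 1) t / (m + 2)` lies in `[t - 1, t] ∩ (0, m + 1)`
    refine ⟨(m + 1) * t / (m + 2), ⟨?_, ?_⟩, ih hm0 ⟨by positivity, ?_⟩⟩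
    · rw [le_div_iff₀ (by positivity)]; nlinarith
    · rw [div_le_iff₀ (by positivity)]; nlinarith
    · rw [div_lt_iff₀ (by positivity)]; nlinarith

lemma integral_pow_mul_indicator_Ioo (j : ℕ) {a b x : ℝ} (ha : 0 ≤ a) (hab : a ≤ b) (hx : 0 ≤ x) :
    ∫ s in 0..x, (x - s) ^ j * (Set.Ioo a b).indicator 1 s =
      (truncPow (j + 1) (x - a) - truncPow (j + 1) (x - b)) / (j + 1) := by
  have hIoc : ∫ s in 0..x, (x - s) ^ j * (Set.Ioo a b).indicator 1 s =
      ∫ s in Set.Ioc a (min x b), (x - s) ^ j := by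
    have hind : (fun s => (x - s) ^ j * (Set.Ioo a b).indicator 1 s) =
        (Set.Ioo a b).indicator (fun s => (x - s) ^ j) := by
      ext s; by_cases hs : s ∈ Set.Ioo a b <;> simp [hs]
    rw [hind, intervalIntegral.integral_of_le hx, setIntegral_indicator measurableSet_Ioo,
      setIntegral_congr_set ((ae_eq_refl _).inter Ioo_ae_eq_Ioc), Set.Ioc_inter_Ioc,
      max_eq_right ha]
  rcases le_total a (min x b) with h | h
  · rw [hIoc, ← intervalIntegral.integral_of_le h, intervalIntegral.integral_comp_sub_left
      (fun u => u ^ j), integral_pow, truncPow_of_nonneg (by linarith [min_le_left x b])]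
    have hb : x - min x b = max (x - b) 0 := by
      rcases le_total x b with hxb | hxb <;> simp [hxb]
    rw [hb, truncPow]
  · rw [hIoc, Set.Ioc_eq_empty (not_lt.2 h), setIntegral_empty]
    rcases min_le_iff.1 h with hxa | hba
    · rw [truncPow_of_nonpos (by linarith) j.succ_ne_zero,
        truncPow_of_nonpos (by linarith) j.succ_ne_zero, sub_zero, zero_div]
    · rw [le_antisymm hba hab, sub_self, zero_div]

lemma gfun_eq_altChooseSum (n : ℕ) (s : ℝ) :
    gfun n s = altChooseSum n
      (fun k => (Set.Ioo ((k : ℝ) / (n + 1)) (((k + 1 : ℕ) : ℝ) / (n + 1))).indicator 1 s) := by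
  simp only [gfun, altChooseSum, Nat.cast_succ, mul_comm ((n.choose _ : ℕ) : ℝ)]
  rfl

lemma Gfun_eq_bSpline {n : ℕ} (hn : n ≠ 0) {x : ℝ} (hx : 0 ≤ x) :
    Gfun n x = (n.factorial * (n + 1) ^ n : ℝ)⁻¹ * bSpline n ((n + 1) * x) := by
  have hscale : ∀ k : ℕ, truncPow n (x - k / (n + 1)) =
      ((n + 1) ^ n : ℝ)⁻¹ * truncPow n ((n + 1) * x - k) := by
    intro k
    rw [← inv_pow, ← truncPow_mul (by positivity)]
    congr 1
    field_simp
  have hfact : ((n - 1).factorial : ℝ) * n = n.factorial := by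
    exact_mod_cast (mul_comm _ _).trans (Nat.mul_factorial_pred hn)
  have hpiece : ∀ k : ℕ, ∫ s in 0..x, (x - s) ^ (n - 1) *
      (Set.Ioo ((k : ℝ) / (n + 1)) (((k + 1 : ℕ) : ℝ) / (n + 1))).indicator 1 s =
      (n : ℝ)⁻¹ * (truncPow n (x - k / (n + 1)) - truncPow n (x - (k + 1 : ℕ) / (n + 1))) := by
    intro k
    rw [integral_pow_mul_indicator_Ioo _ (by positivity) (by gcongr; simp) hx,
      Nat.sub_add_cancel (Nat.one_le_iff_ne_zero.2 hn), div_eq_inv_mul,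
      Nat.cast_pred (Nat.pos_of_ne_zero hn), sub_add_cancel]
  simp only [Gfun, gfun_eq_altChooseSum, ← altChooseSum_const_mul]
  rw [integral_altChooseSum]
  · simp only [hpiece]
    rw [altChooseSum_const_mul, ← altChooseSum_succ, bSpline]
    simp only [hscale]
    rw [altChooseSum_const_mul, ← hfact]
    field_simp
  · exact fun k => IntervalIntegrable.continuousOn_mul
      (intervalIntegrable_iff.2 ((integrableOn_const (by simp)).indicator measurableSet_Ioo))
      (by fun_prop)

lemma Gfun_eq_pow_of_le {n : ℕ} (hn : n ≠ 0) {x : ℝ} (hx0 : 0 ≤ x) (hx1 : x ≤ (n + 1 : ℝ)⁻¹) :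
    Gfun n x = (n.factorial : ℝ)⁻¹ * x ^ n := by
  have hx1' : (n + 1) * x ≤ 1 := calc
    (n + 1) * x ≤ (n + 1) * (n + 1 : ℝ)⁻¹ := by gcongr
    _ = 1 := mul_inv_cancel₀ (by positivity)
  rw [Gfun_eq_bSpline hn hx0, bSpline_of_le_one hn (by positivity) hx1', mul_pow]
  field_simp

lemma Gfun_one_sub {n : ℕ} (hn : n ≠ 0) {x : ℝ} (hx : x ∈ Set.Icc (0 : ℝ) 1) :
    Gfun n (1 - x) = Gfun n x := by
  rw [Gfun_eq_bSpline hn (by linarith [hx.2]), Gfun_eq_bSpline hn hx.1, ← bSpline_symm hn]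
  ring_nf

lemma Gfun_pos {n : ℕ} (hn : n ≠ 0) {x : ℝ} (hx : x ∈ Set.Ioo (0 : ℝ) 1) : 0 < Gfun n x := by
  rw [Gfun_eq_bSpline hn hx.1.le]
  exact mul_pos (by positivity) (bSpline_pos hn ⟨by nlinarith [hx.1], by nlinarith [hx.2]⟩)

lemma contDiffOn_Gfun {n : ℕ} (hn : n ≠ 0) :
    ContDiffOn ℝ (n - 1 : ℕ) (Gfun n) (Set.Icc 0 1) :=
  have h := contDiff_const.mul ((contDiff_bSpline n).comp (contDiff_const.mul contDiff_id))
  h.contDiffOn.congr fun _ hx => Gfun_eq_bSpline hn hx.1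

/-- `G_n ∈ C^{n−1}([0,1])`, `G_n(x)/x^n → 1/n!` as `x → 0⁺`, `G_n(1−x) = G_n(x)` so that
`G_n(x) = O((1−x)^n)` as `x → 1⁻`, and `G_n > 0` on `(0,1)`. -/
theorem stmt17 (n : ℕ) (hn : 1 ≤ n) :
    ContDiffOn ℝ ((n - 1 : ℕ) : ℕ∞) (Gfun n) (Set.Icc 0 1) ∧
    Tendsto (fun x : ℝ => Gfun n x / x ^ n) (nhdsWithin 0 (Set.Ioi 0))
      (nhds ((n.factorial : ℝ)⁻¹)) ∧
    (∀ x ∈ Set.Icc (0 : ℝ) 1, Gfun n (1 - x) = Gfun n x) ∧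
    (Gfun n) =O[nhdsWithin 1 (Set.Iio 1)] (fun x : ℝ => (1 - x) ^ n) ∧
    (∀ x ∈ Set.Ioo (0 : ℝ) 1, 0 < Gfun n x) := by
  have hn0 : n ≠ 0 := Nat.one_le_iff_ne_zero.1 hn
  have hδ : (0 : ℝ) < (n + 1 : ℝ)⁻¹ := by positivity
  have hδ1 : (n + 1 : ℝ)⁻¹ ≤ 1 := inv_le_one_of_one_le₀ (by simp)
  refine ⟨contDiffOn_Gfun hn0, ?_, fun x hx => Gfun_one_sub hn0 hx, ?_,
    fun x hx => Gfun_pos hn0 hx⟩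
  · refine tendsto_const_nhds.congr' ?_
    filter_upwards [Ioo_mem_nhdsGT hδ] with x hx
    rw [Gfun_eq_pow_of_le hn0 hx.1.le hx.2.le, mul_div_assoc, div_self (pow_ne_zero n hx.1.ne'),
      mul_one]
  · refine (isBigO_const_mul_self (n.factorial : ℝ)⁻¹ _ _).congr' ?_ EventuallyEq.rfl
    filter_upwards [Ioo_mem_nhdsLT (sub_lt_self 1 hδ)] with x hx
    rw [← Gfun_one_sub hn0 ⟨by linarith [hx.1], hx.2.le⟩,
      Gfun_eq_pow_of_le hn0 (by linarith [hx.2]) (by linarith [hx.1])]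
end
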